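/- Let A ∈ ℂ^{M×M} be Hermitian positive definite, H ∈ ℂ^{M×L} with columns h₁,…,h_L, and fix j. Then h_j* (A + H^{[j]} (H^{[j]})*)⁻¹ h_j = 1 / [(I_L + H* A⁻¹ H)⁻¹]_{jj} − 1, where H^{[j]} is H with column j removed. -/

import Mathlib

open Matrix ComplexOrder

/-!
Both sides are ratios of determinants. Write `B = A + H^{[j]} (H^{[j]})ᴴ`, so that
`A + H Hᴴ = B + h_j h_jᴴ`. The matrix determinant lemma turns the left side into
`det (A + H Hᴴ) / det B - 1`, and Sylvester's identity
`det (A + U V) = det A · det (1 + V A⁻¹ U)` rewrites this ratio as `det S / det S'`, where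
`S = 1 + Hᴴ A⁻¹ H` and `S' = 1 + (H^{[j]})ᴴ A⁻¹ H^{[j]}`. Since `S'` is the `(j, j)` minor
of `S`, Cramer's rule gives `[S⁻¹]_{jj} = det S' / det S`.
-/

namespace Matrix

theorem mul_conjTranspose_eq_submatrix_succAbove_add_vecMulVec {R m : Type*}
    [NonUnitalNonAssocSemiring R] [Star R] {n : ℕ} (H : Matrix m (Fin (n + 1)) R)
    (j : Fin (n + 1)) :
    H * Hᴴ = H.submatrix id j.succAbove * (H.submatrix id j.succAbove)ᴴ +
      vecMulVec (fun i => H i j) (star fun i => H i j) := by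
  ext i k
  simp only [mul_apply, add_apply, vecMulVec_apply, conjTranspose_apply, submatrix_apply, id_eq,
    Pi.star_apply, Fin.sum_univ_succAbove _ j, add_comm]

theorem det_add_vecMulVec {R m : Type*} [CommRing R] [Fintype m] [DecidableEq m]
    {B : Matrix m m R} (hB : IsUnit B.det) (u v : m → R) :
    (B + vecMulVec u v).det = B.det * (1 + v ⬝ᵥ B⁻¹ *ᵥ u) := by
  rw [vecMulVec_eq Unit, det_add_replicateCol_mul_replicateRow hB, det_unique (1 + _), add_apply,
    one_apply_eq, Matrix.mul_assoc, ← replicateCol_mulVec, replicateRow_mul_replicateCol_apply]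

theorem inv_apply_self_eq_det_submatrix_div_det {K : Type*} [Field K] {n : ℕ}
    (S : Matrix (Fin (n + 1)) (Fin (n + 1)) K) (j : Fin (n + 1)) :
    S⁻¹ j j = (S.submatrix j.succAbove j.succAbove).det / S.det := by
  rw [inv_def, smul_apply, adjugate_fin_succ_eq_det_submatrix, smul_eq_mul, Ring.inverse_eq_inv',
    ← two_mul, pow_mul, neg_one_sq, one_pow, one_mul, div_eq_inv_mul]

theorem submatrix_one_add_conjTranspose_mul_mul {R l m n : Type*} [Semiring R] [Star R]
    [Fintype m] [Fintype n] [DecidableEq l] [DecidableEq n]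
    (H : Matrix m n R) (C : Matrix m m R) {f : l → n} (hf : Function.Injective f) :
    (1 + Hᴴ * C * H).submatrix f f = 1 + (H.submatrix id f)ᴴ * C * H.submatrix id f := by
  rw [submatrix_add, Pi.add_apply, Pi.add_apply, submatrix_one f hf,
    submatrix_mul _ _ _ id _ Function.bijective_id, submatrix_mul _ _ _ id _ Function.bijective_id,
    submatrix_id_id, conjTranspose_submatrix]

end Matrix

/-- For `A` Hermitian positive definite, `H ∈ ℂ^{M×L}` with `j`-th column `h_j`,
and `H^{[j]}` the matrix `H` with column `j` removed,
`h_j* (A + H^{[j]} (H^{[j]})ᴴ)⁻¹ h_j = 1 / [(I_L + Hᴴ A⁻¹ H)⁻¹]_{jj} − 1`. -/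
theorem sinr_mse_identity {M L : ℕ} (A : Matrix (Fin M) (Fin M) ℂ)
    (hA : A.PosDef) (H : Matrix (Fin M) (Fin (L + 1)) ℂ) (j : Fin (L + 1)) :
    star (fun i => H i j) ⬝ᵥ
        (A + H.submatrix id j.succAbove * (H.submatrix id j.succAbove)ᴴ)⁻¹.mulVec
          (fun i => H i j) =
      1 / (((1 + Hᴴ * A⁻¹ * H)⁻¹ : Matrix (Fin (L+1)) (Fin (L+1)) ℂ) j j) - 1 := by
  set G := H.submatrix id j.succAbove
  have hA_det : IsUnit A.det := hA.det_pos.ne'.isUnit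
  have hB_det : IsUnit (A + G * Gᴴ).det :=
    (hA.add_posSemidef (posSemidef_self_mul_conjTranspose G)).det_pos.ne'.isUnit
  calc _ = (A + H * Hᴴ).det / (A + G * Gᴴ).det - 1 := by
        rw [mul_conjTranspose_eq_submatrix_succAbove_add_vecMulVec H j, ← add_assoc,
          det_add_vecMulVec hB_det, mul_div_cancel_left₀ _ hB_det.ne_zero, add_sub_cancel_left]
    _ = (1 + Hᴴ * A⁻¹ * H).det / (1 + Gᴴ * A⁻¹ * G).det - 1 := by
        rw [det_add_mul _ _ hA_det, det_add_mul _ _ hA_det, mul_div_mul_left _ _ hA_det.ne_zero]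
    _ = _ := by
        rw [inv_apply_self_eq_det_submatrix_div_det,
          submatrix_one_add_conjTranspose_mul_mul _ _ Fin.succAbove_right_injective, one_div_div]
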